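/- Let 0 → A → B → C → 0 be a short exact sequence of R-modules with A ≠ 0, with A and B of finite quasi-Gorenstein projective dimension, and with C quasi-Gorenstein projective. Then the quasi-Gorenstein projective dimensions of A and B are equal. -/

import Mathlib

/-!
The key fact is `Ext¹(C, Q) = 0` for `C` quasi-Gorenstein projective and `Q` quasi-projective:
if `0 → A → B → C → 0` is exact and `0 → C₁ → P → C → 0` is a step of the complete resolution of
`C`, then `B` is a pushout of `A ← C₁ → P`, so every map `A → Q` extends to `B`. This supplies the
map needed to build the horseshoe to the right; together with the horseshoe to the left it shows
that quasi-Gorenstein projective modules are closed under extensions. They are also closed under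
kernels of epimorphisms `Y → Z`: for a step `0 → Z₁ → P → Z → 0`, the kernel `X` has `X × P` an
extension of `Y` by `Z₁`, and a direct summand with projective complement of a quasi-Gorenstein
projective module is again quasi-Gorenstein projective. The two closure properties give
`qgpdimLE m A ↔ qgpdimLE m B` for every `m` by dimension shifting.

Membership is always proved coinductively: every module of a class in which each member `M` has
steps `0 → N → P → M → 0` and `0 → M → P' → N' → 0` with `N`, `N'` again in the class is
quasi-Gorenstein projective.
-/

open CategoryTheory

universe u
variable {R : Type u} [Ring R]

/-- A module `Q` is quasi-projective if every homomorphism from `Q` to a quotient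
of `Q` lifts to an endomorphism of `Q`. -/
def QuasiProjective (Q : ModuleCat.{u} R) : Prop :=
  ∀ (B : ModuleCat.{u} R) (g : Q ⟶ B), Function.Surjective g →
    ∀ f : Q ⟶ B, ∃ h : Q ⟶ Q, h ≫ g = f

/-- `M` is quasi-Gorenstein projective if it is a syzygy of an exact complex of
projective modules (given by short exact sequences `0 → K (n+1) → P n → K n → 0`)
that remains exact under `Hom(-, Q)` for every quasi-projective module `Q`. -/
def QuasiGorensteinProjective (M : ModuleCat.{u} R) : Prop :=
  ∃ (K P : ℤ → ModuleCat.{u} R) (ι : ∀ n, K (n + 1) ⟶ P n) (π : ∀ n, P n ⟶ K n),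
    (∀ n, Module.Projective R (P n)) ∧
    (∀ n, Function.Injective (ι n)) ∧
    (∀ n, Function.Surjective (π n)) ∧
    (∀ n, Function.Exact (ι n) (π n)) ∧
    (∀ n (Q : ModuleCat.{u} R), QuasiProjective Q →
      ∀ f : K (n + 1) ⟶ Q, ∃ g : P n ⟶ Q, ι n ≫ g = f) ∧
    Nonempty (M ≅ K 0)

/-- `qgpdimLE n M` means the quasi-Gorenstein projective dimension of `M`
is at most `n`: there is a resolution of `M` of length `n` by
quasi-Gorenstein projective modules. -/
def qgpdimLE : ℕ → ModuleCat.{u} R → Prop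
  | 0, M => QuasiGorensteinProjective M
  | n + 1, M => ∃ (K G : ModuleCat.{u} R) (f : K ⟶ G) (g : G ⟶ M),
      QuasiGorensteinProjective G ∧ Function.Injective f ∧ Function.Surjective g ∧
      Function.Exact f g ∧ qgpdimLE n K

/-- The quasi-Gorenstein projective dimension of `M`, as an element of `ℕ∞`
(`⊤` if no finite resolution exists). -/
noncomputable def qgpdim (M : ModuleCat.{u} R) : ℕ∞ :=
  sInf ((fun m : ℕ => (m : ℕ∞)) '' {m : ℕ | qgpdimLE m M})

structure IsShortExact {X Y Z : ModuleCat.{u} R} (a : X ⟶ Y) (b : Y ⟶ Z) : Prop where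
  injective : Function.Injective a
  surjective : Function.Surjective b
  exact : Function.Exact a b

def QPExtending {X Y : ModuleCat.{u} R} (a : X ⟶ Y) : Prop :=
  ∀ Q : ModuleCat.{u} R, QuasiProjective Q → ∀ f : X ⟶ Q, ∃ g : Y ⟶ Q, a ≫ g = f

/-- One of the short exact sequences `0 → K (n+1) → P n → K n → 0` in the definition of
`QuasiGorensteinProjective`. -/
def HasQGPStep (N M : ModuleCat.{u} R) : Prop :=
  ∃ (P : ModuleCat.{u} R) (i : N ⟶ P) (p : P ⟶ M),
    Module.Projective R P ∧ IsShortExact i p ∧ QPExtending i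

section

variable {X Y Z : ModuleCat.{u} R} {a : X ⟶ Y} {b : Y ⟶ Z}

lemma IsShortExact.comp_eq_zero (hs : IsShortExact a b) : a ≫ b = 0 := by
  ext x
  exact hs.exact.apply_apply_eq_zero x

lemma IsShortExact.shortComplex_exact (hs : IsShortExact a b) :
    (ShortComplex.mk a b hs.comp_eq_zero).Exact :=
  (ShortComplex.ShortExact.moduleCat_exact_iff_function_exact _).2 hs.exact

lemma IsShortExact.exists_lift (hs : IsShortExact a b) {M : ModuleCat.{u} R} (g : M ⟶ Y)
    (hg : g ≫ b = 0) : ∃ k : M ⟶ X, k ≫ a = g := by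
  have : Mono a := (ModuleCat.mono_iff_injective a).2 hs.injective
  exact ⟨hs.shortComplex_exact.lift g hg, hs.shortComplex_exact.lift_f g hg⟩

lemma IsShortExact.exists_desc (hs : IsShortExact a b) {M : ModuleCat.{u} R} (t : Y ⟶ M)
    (ht : a ≫ t = 0) : ∃ r : Z ⟶ M, b ≫ r = t := by
  have : Epi b := (ModuleCat.epi_iff_surjective b).2 hs.surjective
  exact ⟨hs.shortComplex_exact.desc t ht, hs.shortComplex_exact.g_desc t ht⟩

lemma IsShortExact.projective_left (hs : IsShortExact a b) [Module.Projective R Y]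
    [Module.Projective R Z] : Module.Projective R X := by
  obtain ⟨σ, hσ⟩ := Module.projective_lifting_property b.hom LinearMap.id hs.surjective
  obtain ⟨ρ, hρ⟩ : ∃ ρ : Y →ₗ[R] X, ρ ∘ₗ a.hom = LinearMap.id :=
    ((hs.exact.split_tfae hs.injective hs.surjective).out 0 1).1 (by exact ⟨σ, hσ⟩)
  exact Module.Projective.of_split a.hom ρ hρ

lemma isShortExact_ker_subtype (p : Y ⟶ Z) (hp : Function.Surjective p) :
    IsShortExact (ModuleCat.ofHom (LinearMap.ker p.hom).subtype) p :=
  ⟨Subtype.val_injective, hp, LinearMap.exact_subtype_ker_map p.hom⟩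

lemma isShortExact_inl_snd (X Z : ModuleCat.{u} R) :
    IsShortExact (ModuleCat.ofHom (LinearMap.inl R X Z)) (ModuleCat.ofHom (LinearMap.snd R X Z)) :=
  ⟨LinearMap.inl_injective, LinearMap.snd_surjective, Function.Exact.inl_snd⟩

lemma isShortExact_zero_id (X : ModuleCat.{u} R) :
    IsShortExact (0 : ModuleCat.of R PUnit ⟶ X) (𝟙 X) :=
  ⟨fun _ _ _ => Subsingleton.elim _ _, Function.surjective_id,
    (LinearMap.exact_zero_iff_injective _ LinearMap.id).2 Function.injective_id⟩

lemma isShortExact_id_zero (X : ModuleCat.{u} R) :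
    IsShortExact (𝟙 X) (0 : X ⟶ ModuleCat.of R PUnit) where
  injective := Function.injective_id
  surjective _ := ⟨0, Subsingleton.elim _ _⟩
  exact := (LinearMap.exact_zero_iff_surjective _ LinearMap.id).2 Function.surjective_id

end

section Ladder

variable {A B C X Y Z : ModuleCat.{u} R} {i : A ⟶ B} {p : B ⟶ C} {a : X ⟶ Y} {b : Y ⟶ Z}
  {f : A ⟶ X} {g : B ⟶ Y} {h : C ⟶ Z}

lemma IsShortExact.surjective_of_ladder (hip : IsShortExact i p) (hab : IsShortExact a b)
    (hfg : i ≫ g = f ≫ a) (hgh : p ≫ h = g ≫ b) (hf : Function.Surjective f)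
    (hh : Function.Surjective h) : Function.Surjective g := by
  have hgi : ∀ α, g (i α) = a (f α) := ConcreteCategory.congr_hom hfg
  have hhp : ∀ β, h (p β) = b (g β) := ConcreteCategory.congr_hom hgh
  intro y
  obtain ⟨c, hc⟩ := hh (b y)
  obtain ⟨β, rfl⟩ := hip.surjective c
  obtain ⟨x, hx⟩ := (hab.exact (y - g β)).1 (by rw [map_sub, ← hhp, hc, sub_self])
  obtain ⟨α, rfl⟩ := hf x
  exact ⟨β + i α, by rw [map_add, hgi, hx, add_sub_cancel]⟩

lemma IsShortExact.injective_of_ladder (hip : IsShortExact i p) (hab : IsShortExact a b)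
    (hfg : i ≫ g = f ≫ a) (hgh : p ≫ h = g ≫ b) (hf : Function.Injective f)
    (hh : Function.Injective h) : Function.Injective g := by
  have hgi : ∀ α, g (i α) = a (f α) := ConcreteCategory.congr_hom hfg
  have hhp : ∀ β, h (p β) = b (g β) := ConcreteCategory.congr_hom hgh
  refine (injective_iff_map_eq_zero g.hom).2 fun β hβ => ?_
  obtain ⟨α, rfl⟩ := (hip.exact β).1 (hh (by rw [hhp, hβ, map_zero, map_zero]))
  have hα : f α = f 0 := hab.injective (by rw [← hgi, hβ, map_zero, map_zero])
  rw [hf hα, map_zero]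

lemma IsShortExact.exists_ker_row (hip : IsShortExact i p) (hab : IsShortExact a b)
    (hfg : i ≫ g = f ≫ a) (hgh : p ≫ h = g ≫ b) {KA KC : ModuleCat.{u} R} {ιA : KA ⟶ A}
    {ιC : KC ⟶ C} (hA : IsShortExact ιA f) (hC : IsShortExact ιC h) :
    ∃ (N : ModuleCat.{u} R) (j : N ⟶ B) (i₀ : KA ⟶ N) (p₀ : N ⟶ KC),
      IsShortExact j g ∧ IsShortExact i₀ p₀ ∧ i₀ ≫ j = ιA ≫ i ∧ j ≫ p = p₀ ≫ ιC := by
  have hker := isShortExact_ker_subtype g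
    (hip.surjective_of_ladder hab hfg hgh hA.surjective hC.surjective)
  set j := ModuleCat.ofHom (LinearMap.ker g.hom).subtype
  obtain ⟨i₀, hi₀⟩ := hker.exists_lift (ιA ≫ i) (by
    rw [Category.assoc, hfg, ← Category.assoc, hA.comp_eq_zero, Limits.zero_comp])
  obtain ⟨p₀, hp₀⟩ := hC.exists_lift (j ≫ p) (by
    rw [Category.assoc, hgh, ← Category.assoc, hker.comp_eq_zero, Limits.zero_comp])
  have hji₀ : ∀ k, j (i₀ k) = i (ιA k) := ConcreteCategory.congr_hom hi₀
  have hιp₀ : ∀ n, ιC (p₀ n) = p (j n) := ConcreteCategory.congr_hom hp₀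
  have hgi : ∀ α, g (i α) = a (f α) := ConcreteCategory.congr_hom hfg
  have hhp : ∀ β, h (p β) = b (g β) := ConcreteCategory.congr_hom hgh
  refine ⟨_, j, i₀, p₀, hker, ⟨?_, fun z => ?_, fun n => ⟨fun hn => ?_, ?_⟩⟩, hi₀, hp₀.symm⟩
  · have : Function.Injective (i₀ ≫ j) := by
      rw [hi₀]; exact hip.injective.comp hA.injective
    exact Function.Injective.of_comp (f := j) this
  · obtain ⟨β, hβ⟩ := hip.surjective (ιC z)
    obtain ⟨x, hx⟩ := (hab.exact (g β)).1 (by rw [← hhp, hβ, hC.exact.apply_apply_eq_zero])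
    obtain ⟨α, rfl⟩ := hA.surjective x
    have hmem : β - i α ∈ LinearMap.ker g.hom := by
      change g (β - i α) = 0
      rw [map_sub, hgi, hx, sub_self]
    refine ⟨⟨_, hmem⟩, hC.injective ?_⟩
    rw [hιp₀]
    change p (β - i α) = ιC z
    rw [map_sub, hip.exact.apply_apply_eq_zero, sub_zero, hβ]
  · obtain ⟨α, hα⟩ := (hip.exact (j n)).1 (by rw [← hιp₀, hn, map_zero])
    obtain ⟨k, rfl⟩ := (hA.exact α).1 (hab.injective (by
      rw [← hgi, hα, hker.exact.apply_apply_eq_zero, map_zero]))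
    exact ⟨k, hker.injective ((hji₀ k).trans hα)⟩
  · rintro ⟨k, rfl⟩
    exact hC.injective (by rw [hιp₀, hji₀, hip.exact.apply_apply_eq_zero, map_zero])

lemma IsShortExact.exists_coker_row (hip : IsShortExact i p) (hab : IsShortExact a b)
    (hfg : i ≫ g = f ≫ a) (hgh : p ≫ h = g ≫ b) {X' Z' : ModuleCat.{u} R} {πX : X ⟶ X'}
    {πZ : Z ⟶ Z'} (hX : IsShortExact f πX) (hZ : IsShortExact h πZ) :
    ∃ (N : ModuleCat.{u} R) (q : Y ⟶ N) (a₀ : X' ⟶ N) (b₀ : N ⟶ Z'),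
      IsShortExact g q ∧ IsShortExact a₀ b₀ ∧ πX ≫ a₀ = a ≫ q ∧ q ≫ b₀ = b ≫ πZ := by
  have hq : IsShortExact g (ModuleCat.ofHom (LinearMap.range g.hom).mkQ) :=
    ⟨hip.injective_of_ladder hab hfg hgh hX.injective hZ.injective, Submodule.mkQ_surjective _,
      LinearMap.exact_map_mkQ_range _⟩
  set q := ModuleCat.ofHom (LinearMap.range g.hom).mkQ
  obtain ⟨a₀, ha₀⟩ := hX.exists_desc (a ≫ q) (by
    rw [← Category.assoc, ← hfg, Category.assoc, hq.comp_eq_zero, Limits.comp_zero])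
  obtain ⟨b₀, hb₀⟩ := hq.exists_desc (b ≫ πZ) (by
    rw [← Category.assoc, ← hgh, Category.assoc, hZ.comp_eq_zero, Limits.comp_zero])
  have ha₀π : ∀ x, a₀ (πX x) = q (a x) := ConcreteCategory.congr_hom ha₀
  have hb₀q : ∀ y, b₀ (q y) = πZ (b y) := ConcreteCategory.congr_hom hb₀
  have hgi : ∀ α, g (i α) = a (f α) := ConcreteCategory.congr_hom hfg
  have hhp : ∀ β, h (p β) = b (g β) := ConcreteCategory.congr_hom hgh
  refine ⟨_, q, a₀, b₀, hq, ⟨?_, fun z' => ?_, fun n => ⟨fun hn => ?_, ?_⟩⟩, ha₀, hb₀⟩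
  · refine (injective_iff_map_eq_zero a₀.hom).2 fun x' hx' => ?_
    obtain ⟨x, rfl⟩ := hX.surjective x'
    obtain ⟨β, hβ⟩ := (hq.exact (a x)).1 ((ha₀π x).symm.trans hx')
    obtain ⟨α, rfl⟩ := (hip.exact β).1 (hZ.injective (by
      rw [hhp, hβ, hab.exact.apply_apply_eq_zero, map_zero]))
    rw [← hab.injective ((hgi α).symm.trans hβ)]
    exact hX.exact.apply_apply_eq_zero α
  · obtain ⟨z, rfl⟩ := hZ.surjective z'
    obtain ⟨y, rfl⟩ := hab.surjective z
    exact ⟨q y, hb₀q y⟩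
  · obtain ⟨y, rfl⟩ := hq.surjective n
    obtain ⟨c, hc⟩ := (hZ.exact (b y)).1 ((hb₀q y).symm.trans hn)
    obtain ⟨β, rfl⟩ := hip.surjective c
    obtain ⟨x, hx⟩ := (hab.exact (y - g β)).1 (by rw [map_sub, ← hhp, hc, sub_self])
    exact ⟨πX x, by rw [ha₀π, hx, map_sub, hq.exact.apply_apply_eq_zero, sub_zero]⟩
  · rintro ⟨x', rfl⟩
    obtain ⟨x, rfl⟩ := hX.surjective x'
    rw [ha₀π, hb₀q, hab.exact.apply_apply_eq_zero, map_zero]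

end Ladder

section

variable {X Y Z : ModuleCat.{u} R} {a : X ⟶ Y} {b : Y ⟶ Z}

lemma IsShortExact.exists_horseshoe_ker (hs : IsShortExact a b)
    {KX GX KZ PZ : ModuleCat.{u} R} {ιX : KX ⟶ GX} {πX : GX ⟶ X} {ιZ : KZ ⟶ PZ} {πZ : PZ ⟶ Z}
    (hX : IsShortExact ιX πX) (hZ : IsShortExact ιZ πZ) [Module.Projective R PZ] :
    ∃ (p : ModuleCat.of R (GX × PZ) ⟶ Y) (N : ModuleCat.{u} R)
      (j : N ⟶ ModuleCat.of R (GX × PZ)) (a₁ : KX ⟶ N) (b₁ : N ⟶ KZ),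
      IsShortExact j p ∧ IsShortExact a₁ b₁ ∧
      a₁ ≫ j = ιX ≫ ModuleCat.ofHom (LinearMap.inl R GX PZ) ∧
      j ≫ ModuleCat.ofHom (LinearMap.snd R GX PZ) = b₁ ≫ ιZ := by
  obtain ⟨h, hh⟩ := Module.projective_lifting_property b.hom πZ.hom hs.surjective
  have hbh : ∀ q, b.hom (h q) = πZ.hom q := LinearMap.congr_fun hh
  exact ⟨_, (isShortExact_inl_snd GX PZ).exists_ker_row hs
    (g := ModuleCat.ofHom ((πX ≫ a).hom.coprod h)) (by ext; simp)
    (by ext <;> simp [hbh, hs.exact.apply_apply_eq_zero]) hX hZ⟩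

lemma IsShortExact.exists_horseshoe_coker (hs : IsShortExact a b)
    {PX X' PZ Z' : ModuleCat.{u} R} {ιX : X ⟶ PX} {πX : PX ⟶ X'} {ιZ : Z ⟶ PZ} {πZ : PZ ⟶ Z'}
    (hX : IsShortExact ιX πX) (hZ : IsShortExact ιZ πZ) (α : Y ⟶ PX) (hα : a ≫ α = ιX) :
    ∃ (t : Y ⟶ ModuleCat.of R (PX × PZ)) (N : ModuleCat.{u} R)
      (q : ModuleCat.of R (PX × PZ) ⟶ N) (a₀ : X' ⟶ N) (b₀ : N ⟶ Z'),
      IsShortExact t q ∧ IsShortExact a₀ b₀ ∧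
      a ≫ t = ιX ≫ ModuleCat.ofHom (LinearMap.inl R PX PZ) ∧
      t ≫ ModuleCat.ofHom (LinearMap.snd R PX PZ) = b ≫ ιZ := by
  let t : Y ⟶ ModuleCat.of R (PX × PZ) := ModuleCat.ofHom (α.hom.prod (b ≫ ιZ).hom)
  have hat : a ≫ t = ιX ≫ ModuleCat.ofHom (LinearMap.inl R PX PZ) := by
    ext x <;> simp [t, ← hα, hs.exact.apply_apply_eq_zero]
  have htb : t ≫ ModuleCat.ofHom (LinearMap.snd R PX PZ) = b ≫ ιZ := rfl
  obtain ⟨N, q, a₀, b₀, htq, hab₀, -, -⟩ :=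
    hs.exists_coker_row (isShortExact_inl_snd PX PZ) hat htb.symm hX hZ
  exact ⟨t, N, q, a₀, b₀, htq, hab₀, hat, htb⟩

lemma IsShortExact.exists_ker_comp (hs : IsShortExact a b) {K G : ModuleCat.{u} R}
    {ι : K ⟶ G} {π : G ⟶ Y} (hK : IsShortExact ι π) :
    ∃ (N : ModuleCat.{u} R) (e : N ⟶ G) (j : K ⟶ N) (q : N ⟶ X),
      IsShortExact e (π ≫ b) ∧ IsShortExact j q ∧ j ≫ e = ι := by
  -- the kernel row of the ladder from `K → G → Y` to `0 → Z → Z`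
  obtain ⟨N, e, j, q, he, hjq, hje, -⟩ := hK.exists_ker_row (isShortExact_zero_id Z)
    (f := 0) (g := π ≫ b) (h := b) (by rw [← Category.assoc, hK.comp_eq_zero]; simp)
    (Category.comp_id _).symm (isShortExact_id_zero K) hs
  exact ⟨N, e, j, q, he, hjq, by simpa using hje⟩

lemma IsShortExact.exists_coker_comp (hs : IsShortExact a b) {P W : ModuleCat.{u} R}
    {ι : Y ⟶ P} {π : P ⟶ W} (hY : IsShortExact ι π) :
    ∃ (N : ModuleCat.{u} R) (q : P ⟶ N) (c : Z ⟶ N) (d : N ⟶ W),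
      IsShortExact (a ≫ ι) q ∧ IsShortExact c d := by
  -- the cokernel row of the ladder from `X → X → 0` to `Y → P → W`
  obtain ⟨N, q, c, d, hq, hcd, -, -⟩ := (isShortExact_id_zero X).exists_coker_row hY
    (f := a) (g := a ≫ ι) (h := 0) (Category.id_comp _)
    (by rw [Category.assoc, hY.comp_eq_zero]; simp) hs (isShortExact_zero_id W)
  exact ⟨N, q, c, d, hq, hcd⟩

lemma QuasiProjective.of_projective {Q : ModuleCat.{u} R} [Module.Projective R Q] :
    QuasiProjective Q := by
  intro B g hg f
  obtain ⟨h, hh⟩ := Module.projective_lifting_property g.hom f.hom hg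
  exact ⟨ModuleCat.ofHom h, ModuleCat.hom_ext hh⟩

lemma QPExtending.comp (ha : QPExtending a) (hb : QPExtending b) : QPExtending (a ≫ b) := by
  intro Q hQ f
  obtain ⟨g, rfl⟩ := ha Q hQ f
  obtain ⟨h, rfl⟩ := hb Q hQ g
  exact ⟨h, Category.assoc _ _ _⟩

lemma QPExtending.of_comp (h : QPExtending (a ≫ b)) : QPExtending a := by
  intro Q hQ f
  obtain ⟨g, hg⟩ := h Q hQ f
  exact ⟨b ≫ g, (Category.assoc _ _ _).symm.trans hg⟩

lemma QPExtending.of_retraction (r : Y ⟶ X) (hr : a ≫ r = 𝟙 X) : QPExtending a :=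
  fun _ _ f => ⟨r ≫ f, by rw [← Category.assoc, hr, Category.id_comp]⟩

lemma QPExtending.of_subsingleton [Subsingleton X] (a : X ⟶ Y) : QPExtending a :=
  fun _ _ _ => ⟨0, by ext x; rw [Subsingleton.elim x 0]; simp⟩

lemma IsShortExact.qpExtending_of_hasQGPStep (hs : IsShortExact a b) {Z₁ : ModuleCat.{u} R}
    (hZ : HasQGPStep Z₁ Z) : QPExtending a := by
  obtain ⟨P, ι, π, hP, hιπ, hι⟩ := hZ
  intro Q hQ f
  obtain ⟨h, hh⟩ := Module.projective_lifting_property b.hom π.hom hs.surjective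
  have hbh : ∀ p, b (h p) = π p := LinearMap.congr_fun hh
  obtain ⟨k, hk⟩ := hs.exists_lift (ι ≫ ModuleCat.ofHom h) (by
    ext z; simp [hbh, hιπ.exact.apply_apply_eq_zero])
  have hak : ∀ z, a (k z) = h (ι z) := ConcreteCategory.congr_hom hk
  obtain ⟨G, hG⟩ := hι Q hQ (k ≫ f)
  have hGι : ∀ z, G (ι z) = f (k z) := ConcreteCategory.congr_hom hG
  -- `Y` is the pushout of `X ← Z₁ → P`, so `f` and `G` glue to a map on `Y`.
  let s : ModuleCat.of R (X × P) ⟶ Y := ModuleCat.ofHom (a.hom.coprod h)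
  have hs_surj : Function.Surjective s := by
    intro y
    obtain ⟨p, hp⟩ := hιπ.surjective (b y)
    obtain ⟨x, hx⟩ := (hs.exact (y - h p)).1 (by simp [hbh, hp])
    exact ⟨(x, p), by simp [s, hx]⟩
  obtain ⟨F, hF⟩ := (isShortExact_ker_subtype s hs_surj).exists_desc
    (ModuleCat.ofHom (f.hom.coprod G.hom)) (by
      ext ⟨⟨x, p⟩, hxp⟩
      have hxp : h p = -a x := (neg_eq_of_add_eq_zero_right hxp).symm
      obtain ⟨z, rfl⟩ := (hιπ.exact p).1 (by
        rw [← hbh, hxp, map_neg, hs.exact.apply_apply_eq_zero, neg_zero])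
      have hx : x = -k z := hs.injective (by rw [map_neg, hak, hxp, neg_neg])
      simp [hx, hGι])
  exact ⟨F, by ext x; simpa [s] using ConcreteCategory.congr_hom hF (x, 0)⟩

lemma IsShortExact.qpExtending_prod (hs : IsShortExact a b) {A C : ModuleCat.{u} R}
    {f : X ⟶ A} {h : Z ⟶ C} (hf : QPExtending f) (hh : QPExtending h)
    (g : Y ⟶ ModuleCat.of R (A × C)) (hag : a ≫ g = f ≫ ModuleCat.ofHom (LinearMap.inl R A C))
    (hgb : g ≫ ModuleCat.ofHom (LinearMap.snd R A C) = b ≫ h) : QPExtending g := by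
  have hga : ∀ x, g (a x) = (f x, 0) := ConcreteCategory.congr_hom hag
  have hgb : ∀ y, (g y).2 = h (b y) := ConcreteCategory.congr_hom hgb
  intro Q hQ φ
  obtain ⟨φA, hφA⟩ := hf Q hQ (a ≫ φ)
  have hφAf : ∀ x, φA (f x) = φ (a x) := ConcreteCategory.congr_hom hφA
  obtain ⟨r, hr⟩ := hs.exists_desc (φ - g ≫ ModuleCat.ofHom (LinearMap.fst R A C) ≫ φA) (by
    ext x; simp [hga, hφAf])
  obtain ⟨φC, hφC⟩ := hh Q hQ r
  refine ⟨ModuleCat.ofHom (φA.hom.coprod φC.hom), ?_⟩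
  ext y
  have hry : r (b y) = φ y - φA (g y).1 := ConcreteCategory.congr_hom hr y
  have hφC' : φC (h (b y)) = r (b y) := ConcreteCategory.congr_hom hφC (b y)
  change φA (g y).1 + φC (g y).2 = φ y
  rw [hgb, hφC', hry, add_sub_cancel]

lemma HasQGPStep.of_iso_left {X' : ModuleCat.{u} R} (e : X' ≅ X) (h : HasQGPStep X Y) :
    HasQGPStep X' Y := by
  obtain ⟨P, i, p, hP, hs, hi⟩ := h
  refine ⟨P, e.hom ≫ i, p, hP, ⟨hs.injective.comp e.toLinearEquiv.injective, hs.surjective, ?_⟩,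
    (QPExtending.of_retraction e.inv e.hom_inv_id).comp hi⟩
  exact e.toLinearEquiv.precomp_exact_iff_exact.2 hs.exact

lemma HasQGPStep.of_iso_right {Y' : ModuleCat.{u} R} (e : Y ≅ Y') (h : HasQGPStep X Y) :
    HasQGPStep X Y' := by
  obtain ⟨P, i, p, hP, hs, hi⟩ := h
  exact ⟨P, i, p ≫ e.hom, hP, ⟨hs.injective, e.toLinearEquiv.surjective.comp hs.surjective,
    hs.exact.comp_injective _ e.toLinearEquiv.injective (map_zero e.hom.hom)⟩, hi⟩

lemma quasiGorensteinProjective_iff {M : ModuleCat.{u} R} :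
    QuasiGorensteinProjective M ↔
      ∃ K : ℤ → ModuleCat.{u} R, (∀ n, HasQGPStep (K (n + 1)) (K n)) ∧ Nonempty (M ≅ K 0) := by
  constructor
  · rintro ⟨K, P, ι, π, hP, hι, hπ, hex, hlift, he⟩
    exact ⟨K, fun n => ⟨P n, ι n, π n, hP n, ⟨hι n, hπ n, hex n⟩, hlift n⟩, he⟩
  · rintro ⟨K, hK, he⟩
    choose P ι π hP hs hι using hK
    exact ⟨K, P, ι, π, hP, fun n => (hs n).injective, fun n => (hs n).surjective,
      fun n => (hs n).exact, hι, he⟩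

lemma QuasiGorensteinProjective.of_hasQGPStep_succ {K : ℤ → ModuleCat.{u} R}
    (hK : ∀ n, HasQGPStep (K (n + 1)) (K n)) (j : ℤ) : QuasiGorensteinProjective (K j) :=
  quasiGorensteinProjective_iff.2 ⟨fun n => K (n + j),
    fun n => by simpa only [add_right_comm] using hK (n + j), ⟨eqToIso (by simp)⟩⟩

lemma QuasiGorensteinProjective.exists_hasQGPStep_left (h : QuasiGorensteinProjective X) :
    ∃ N, QuasiGorensteinProjective N ∧ HasQGPStep N X := by
  obtain ⟨K, hK, ⟨e⟩⟩ := quasiGorensteinProjective_iff.1 h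
  exact ⟨K 1, of_hasQGPStep_succ hK 1, (hK 0).of_iso_right e.symm⟩

lemma QuasiGorensteinProjective.exists_hasQGPStep_right (h : QuasiGorensteinProjective X) :
    ∃ N, QuasiGorensteinProjective N ∧ HasQGPStep X N := by
  obtain ⟨K, hK, ⟨e⟩⟩ := quasiGorensteinProjective_iff.1 h
  have hK₀ : HasQGPStep (K 0) (K (-1)) := by simpa using hK (-1)
  exact ⟨K (-1), of_hasQGPStep_succ hK (-1), hK₀.of_iso_left e⟩

theorem QuasiGorensteinProjective.coinduct (C : ModuleCat.{u} R → Prop)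
    (hl : ∀ M, C M → ∃ N, C N ∧ HasQGPStep N M) (hr : ∀ M, C M → ∃ N, C N ∧ HasQGPStep M N)
    (hX : C X) : QuasiGorensteinProjective X := by
  choose! l hlC hlS using hl
  choose! r hrC hrS using hr
  have hlX : ∀ n, C (l^[n] X) := Function.Iterate.rec C hX hlC
  have hrX : ∀ n, C (r^[n] X) := Function.Iterate.rec C hX hrC
  refine quasiGorensteinProjective_iff.2
    ⟨fun | .ofNat n => l^[n] X | .negSucc n => r^[n + 1] X, ?_, ⟨Iso.refl X⟩⟩
  rintro (n | _ | n)
  · change HasQGPStep (l^[n + 1] X) (l^[n] X)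
    simpa only [Function.iterate_succ_apply'] using hlS _ (hlX n)
  · exact hrS X hX
  · change HasQGPStep (r^[n + 1] X) (r^[n + 2] X)
    simpa only [Function.iterate_succ_apply'] using hrS _ (hrX (n + 1))

lemma QuasiGorensteinProjective.of_projective [Module.Projective R X] :
    QuasiGorensteinProjective X :=
  coinduct (fun M => Module.Projective R M)
    (fun M hM => ⟨ModuleCat.of R PUnit, inferInstance, M, 0, 𝟙 M, hM, isShortExact_zero_id M,
      QPExtending.of_subsingleton _⟩)
    (fun M hM => ⟨ModuleCat.of R PUnit, inferInstance, M, 𝟙 M, 0, hM, isShortExact_id_zero M,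
      QPExtending.of_retraction (𝟙 M) (Category.id_comp _)⟩)
    ‹_›

theorem IsShortExact.quasiGorensteinProjective_mid (hs : IsShortExact a b)
    (hX : QuasiGorensteinProjective X) (hZ : QuasiGorensteinProjective Z) :
    QuasiGorensteinProjective Y := by
  refine QuasiGorensteinProjective.coinduct (fun Y => ∃ (X Z : ModuleCat.{u} R) (a : X ⟶ Y)
    (b : Y ⟶ Z), IsShortExact a b ∧ QuasiGorensteinProjective X ∧ QuasiGorensteinProjective Z)
    ?_ ?_ ⟨X, Z, a, b, hs, hX, hZ⟩
  · rintro Y ⟨X, Z, a, b, hs, hX, hZ⟩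
    obtain ⟨X₁, hX₁, PX, ιX, πX, hPX, hιπX, hιX⟩ := hX.exists_hasQGPStep_left
    obtain ⟨Z₁, hZ₁, PZ, ιZ, πZ, hPZ, hιπZ, hιZ⟩ := hZ.exists_hasQGPStep_left
    obtain ⟨p, N, j, a₁, b₁, hjp, hs₁, hja, hjb⟩ := hs.exists_horseshoe_ker hιπX hιπZ
    exact ⟨N, ⟨X₁, Z₁, a₁, b₁, hs₁, hX₁, hZ₁⟩, _, j, p, inferInstance, hjp,
      hs₁.qpExtending_prod hιX hιZ j hja hjb⟩
  · rintro Y ⟨X, Z, a, b, hs, hX, hZ⟩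
    obtain ⟨X', hX', PX, ιX, πX, hPX, hιπX, hιX⟩ := hX.exists_hasQGPStep_right
    obtain ⟨Z', hZ', PZ, ιZ, πZ, hPZ, hιπZ, hιZ⟩ := hZ.exists_hasQGPStep_right
    obtain ⟨Z₁, -, hZ₁⟩ := hZ.exists_hasQGPStep_left
    obtain ⟨α, hα⟩ := hs.qpExtending_of_hasQGPStep hZ₁ PX QuasiProjective.of_projective ιX
    obtain ⟨t, N, q, a', b', htq, hs', hta, htb⟩ := hs.exists_horseshoe_coker hιπX hιπZ α hα
    exact ⟨N, ⟨X', Z', a', b', hs', hX', hZ'⟩, _, t, q, inferInstance, htq,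
      hs.qpExtending_prod hιX hιZ t hta htb⟩

theorem QuasiGorensteinProjective.of_prod_projective {X P : ModuleCat.{u} R}
    [Module.Projective R P] (h : QuasiGorensteinProjective (ModuleCat.of R (X × P))) :
    QuasiGorensteinProjective X := by
  refine QuasiGorensteinProjective.coinduct (fun M => QuasiGorensteinProjective M ∨ M = X)
    ?_ ?_ (Or.inr rfl)
  · rintro M (hM | rfl)
    · obtain ⟨N, hN, hNM⟩ := hM.exists_hasQGPStep_left
      exact ⟨N, Or.inl hN, hNM⟩
    · obtain ⟨W₁, hW₁, P₁, ι, π, hP₁, hιπ, hι⟩ := h.exists_hasQGPStep_left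
      obtain ⟨N, e, j, q, heπ, hjq, hje⟩ := (isShortExact_inl_snd M P).exists_ker_comp hιπ
      exact ⟨W₁, Or.inl hW₁, N, j, q, heπ.projective_left, hjq, (hje ▸ hι).of_comp⟩
  · rintro M (hM | rfl)
    · obtain ⟨N, hN, hMN⟩ := hM.exists_hasQGPStep_right
      exact ⟨N, Or.inl hN, hMN⟩
    · obtain ⟨W, hW, P', ι, π, hP', hιπ, hι⟩ := h.exists_hasQGPStep_right
      obtain ⟨N, q, c, d, hq, hcd⟩ := (isShortExact_inl_snd M P).exists_coker_comp hιπ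
      exact ⟨N, Or.inl (hcd.quasiGorensteinProjective_mid .of_projective hW), P', _, q, hP', hq,
        (QPExtending.of_retraction (ModuleCat.ofHom (LinearMap.fst R M P)) (by ext; rfl)).comp hι⟩

theorem IsShortExact.quasiGorensteinProjective_left (hs : IsShortExact a b)
    (hY : QuasiGorensteinProjective Y) (hZ : QuasiGorensteinProjective Z) :
    QuasiGorensteinProjective X := by
  obtain ⟨Z₁, hZ₁, PZ, ιZ, πZ, hPZ, hιπZ, -⟩ := hZ.exists_hasQGPStep_left
  -- With the trivial resolution `0 → X → X`, the horseshoe exhibits `X × PZ` as an extension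
  -- of `Y` by a module `N ≅ Z₁`.
  obtain ⟨p, N, j, _, _, hjp, hN, -, -⟩ := hs.exists_horseshoe_ker (isShortExact_zero_id X) hιπZ
  exact .of_prod_projective (P := PZ) (hjp.quasiGorensteinProjective_mid
    (hN.quasiGorensteinProjective_mid .of_projective hZ₁) hY)

lemma IsShortExact.qgpdimLE_left (hs : IsShortExact a b) (hZ : QuasiGorensteinProjective Z)
    {m : ℕ} (hY : qgpdimLE m Y) : qgpdimLE m X := by
  cases m with
  | zero => exact hs.quasiGorensteinProjective_left hY hZ
  | succ m =>
    obtain ⟨K, G, ι, π, hG, hι, hπ, hιπ, hK⟩ := hY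
    obtain ⟨N, e, j, q, heb, hjq, -⟩ := hs.exists_ker_comp ⟨hι, hπ, hιπ⟩
    exact ⟨K, N, j, q, heb.quasiGorensteinProjective_left hG hZ, hjq.injective, hjq.surjective,
      hjq.exact, hK⟩

lemma IsShortExact.qgpdimLE_mid (hs : IsShortExact a b) (hZ : QuasiGorensteinProjective Z)
    {m : ℕ} (hX : qgpdimLE m X) : qgpdimLE m Y := by
  induction m generalizing X Y Z with
  | zero => exact hs.quasiGorensteinProjective_mid hX hZ
  | succ m ih =>
    obtain ⟨K, G, ι, π, hG, hι, hπ, hιπ, hK⟩ := hX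
    obtain ⟨Z₁, hZ₁, PZ, ιZ, πZ, hPZ, hιπZ, -⟩ := hZ.exists_hasQGPStep_left
    obtain ⟨p, N, j, _, _, hjp, hs₁, -, -⟩ := hs.exists_horseshoe_ker ⟨hι, hπ, hιπ⟩ hιπZ
    exact ⟨N, _, j, p, (isShortExact_inl_snd G PZ).quasiGorensteinProjective_mid hG .of_projective,
      hjp.injective, hjp.surjective, hjp.exact, ih hs₁ hZ₁ hK⟩

end

theorem qgpdim_eq_of_ses_general {A B C : ModuleCat.{u} R}
    (f : A ⟶ B) (g : B ⟶ C)
    (hf : Function.Injective f) (hg : Function.Surjective g)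
    (hfg : Function.Exact f g)
    (hC : QuasiGorensteinProjective C) :
    qgpdim A = qgpdim B := by
  have hs : IsShortExact f g := ⟨hf, hg, hfg⟩
  have hAB : {m : ℕ | qgpdimLE m A} = {m : ℕ | qgpdimLE m B} :=
    Set.ext fun _ => ⟨hs.qgpdimLE_mid hC, hs.qgpdimLE_left hC⟩
  rw [qgpdim, qgpdim, hAB]

/-- For a short exact sequence `0 → A → B → C → 0` with `A ≠ 0`, `A` and `B` of
finite quasi-Gorenstein projective dimension and `C` quasi-Gorenstein projective,
the quasi-Gorenstein projective dimensions of `A` and `B` coincide. -/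
theorem qgpdim_eq_of_ses {A B C : ModuleCat.{u} R}
    (f : A ⟶ B) (g : B ⟶ C)
    (hf : Function.Injective f) (hg : Function.Surjective g)
    (hfg : Function.Exact f g)
    (hA0 : Nontrivial A)
    (hA : ∃ m : ℕ, qgpdimLE m A) (hB : ∃ m : ℕ, qgpdimLE m B)
    (hC : QuasiGorensteinProjective C) :
    qgpdim A = qgpdim B :=
  qgpdim_eq_of_ses_general f g hf hg hfg hC
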